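/- arXiv:2005.02921 — 3 statements merged into one kernel-verified Lean document; each statement's English description precedes it below -/
import Mathlib

section
/- Let C ∈ ℝ^{n×n} be positive definite with eigenvalues λ₁ ≥ ... ≥ λₙ and corresponding orthonormal eigenvectors u₁,...,uₙ, and let 1 ≤ p < n be such that λ_p > λ_j for some j > p. Then the minimizer of log det(K) + tr(K⁻¹C) over K of the form K = Σ_{j=1}^p α_j² x_j x_jᵀ + σ²·1 with orthonormal x_j, α_j² ≥ 0, σ² > 0, is given by x_j = u_j, σ² = (1/(n-p)) Σ_{j=p+1}^n λ_j, and α_j² = λ_j − σ² > 0. -/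
/-!
Write `K = X diag(α) Xᵀ + σ²·1` with `Xᵀ X = 1`. Then `det K = σ^{2(n-p)} ∏ (α_j + σ²)` and
`K⁻¹ = σ⁻²·1 - X diag(w) Xᵀ` with `w_j = σ⁻² - (α_j + σ²)⁻¹ ≥ 0`, so
`L(K) = (n-p) log σ² + ∑ log (α_j + σ²) + tr C / σ² - ∑ w_j x_jᵀ C x_j`.
After permuting the columns, `α` and hence `w` are decreasing. Ky Fan's inequality (the Rayleigh
quotients of `k` orthonormal vectors sum to at most `λ₁ + ⋯ + λ_k`) together with summation by
parts gives `∑ w_j x_jᵀ C x_j ≤ ∑ w_j λ_j`, which decouples `L(K)` into scalar terms bounded by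
`log b + a / b ≥ log a + 1`: `log (α_j + σ²) + λ_j / (α_j + σ²) ≥ log λ_j + 1` and
`(n-p) (log σ² + σ̂² / σ²) ≥ (n-p) (log σ̂² + 1)`. The proposed `K` attains every one of these
bounds, and `α̂_j > 0` because `σ̂²`, the mean of `λ_{p+1}, …, λ_n`, lies strictly below `λ_p`.
-/

open Matrix

/-- Negative log-likelihood `log det K + tr(K⁻¹ C)`. -/
noncomputable def negLogLik {n : ℕ} (K C : Matrix (Fin n) (Fin n) ℝ) : ℝ :=
  Real.log K.det + (K⁻¹ * C).trace

open Finset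

lemma log_add_one_le_log_add_div {a b : ℝ} (ha : 0 < a) (hb : 0 < b) :
    Real.log a + 1 ≤ Real.log b + a / b := by
  have h := Real.log_le_sub_one_of_pos (div_pos ha hb)
  rw [Real.log_div ha.ne' hb.ne'] at h
  linarith

lemma sum_mul_le_sum_of_threshold {ι : Type*} [Fintype ι] (S : Finset ι)
    {l t : ι → ℝ} {c : ℝ} (hS : ∀ i ∈ S, c ≤ l i) (hSc : ∀ i ∉ S, l i ≤ c)
    (ht0 : ∀ i, 0 ≤ t i) (ht1 : ∀ i, t i ≤ 1) (hts : ∑ i, t i = #S) :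
    ∑ i, l i * t i ≤ ∑ i ∈ S, l i := by
  classical
  have hterm : ∀ i, (l i - c) * (t i - if i ∈ S then 1 else 0) ≤ 0 := by
    intro i
    split_ifs with hi
    · exact mul_nonpos_of_nonneg_of_nonpos (sub_nonneg.2 (hS i hi)) (by linarith [ht1 i])
    · exact mul_nonpos_of_nonpos_of_nonneg (sub_nonpos.2 (hSc i hi)) (by linarith [ht0 i])
  have hsum : ∑ i, (l i - c) * (t i - if i ∈ S then 1 else 0)
      = ∑ i, l i * t i - ∑ i ∈ S, l i := by
    simp only [mul_sub, sub_mul, mul_ite, mul_one, mul_zero, sum_sub_distrib, ← mul_sum, hts,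
      sum_ite_mem, univ_inter, sum_const, nsmul_eq_mul]
    ring
  linarith [sum_nonpos fun i (_ : i ∈ univ) => hterm i]

lemma Fin.mem_map_castLEEmb_univ {p n : ℕ} (h : p ≤ n) (i : Fin n) :
    i ∈ univ.map (Fin.castLEEmb h) ↔ (i : ℕ) < p := by
  simp only [mem_map, mem_univ, true_and, Fin.castLEEmb_apply, Fin.ext_iff, Fin.val_castLE]
  exact ⟨fun ⟨j, hj⟩ => hj ▸ j.isLt, fun hi => ⟨⟨i, hi⟩, rfl⟩⟩

lemma Fin.compl_map_castLEEmb {p n : ℕ} (h : p ≤ n) :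
    (univ.map (Fin.castLEEmb h))ᶜ = univ.filter (fun i : Fin n => p ≤ (i : ℕ)) := by
  ext i
  simp only [mem_compl, Fin.mem_map_castLEEmb_univ, mem_filter, mem_univ, true_and, not_lt]

lemma Fin.card_filter_le_val {p n : ℕ} (h : p ≤ n) :
    #(univ.filter (fun i : Fin n => p ≤ (i : ℕ))) = n - p := by
  rw [← Fin.compl_map_castLEEmb h, card_compl]
  simp

lemma Fin.sum_castLE_add_sum_filter_le {M : Type*} [AddCommMonoid M] {p n : ℕ} (h : p ≤ n)
    (f : Fin n → M) :
    ∑ j : Fin p, f (Fin.castLE h j) + ∑ i ∈ univ.filter (fun i : Fin n => p ≤ (i : ℕ)), f i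
      = ∑ i, f i := by
  rw [← Fin.compl_map_castLEEmb h, ← sum_add_sum_compl (univ.map (Fin.castLEEmb h)) f, sum_map]
  rfl

namespace Matrix

variable {m k : Type*} [Fintype m]

lemma sum_sq_col_eq_one [DecidableEq k] {X : Matrix m k ℝ} (hX : Xᵀ * X = 1) (j : k) :
    ∑ i, X i j ^ 2 = 1 := by
  simpa [mul_apply, sq] using congr_fun₂ hX j j

lemma sum_sq_row_le_one [Fintype k] [DecidableEq k] {X : Matrix m k ℝ} (hX : Xᵀ * X = 1)
    (i : m) : ∑ j, X i j ^ 2 ≤ 1 := by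
  set P := X * Xᵀ
  have hPP : P * P = P := by
    rw [Matrix.mul_assoc, ← Matrix.mul_assoc Xᵀ, hX, Matrix.one_mul]
  have hPsymm : Pᵀ = P := by simp [P]
  have hPii : P i i = ∑ j, X i j ^ 2 := by simp [P, mul_apply, sq]
  have hPsq : P i i = ∑ k, P i k ^ 2 := by
    conv_lhs => rw [← hPP]
    simp only [mul_apply, sq]
    exact sum_congr rfl fun k _ => by rw [← transpose_apply P k i, hPsymm]
  have : P i i ^ 2 ≤ P i i := hPsq ▸ single_le_sum (fun k _ => sq_nonneg (P i k)) (mem_univ i)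
  nlinarith [hPii ▸ sum_nonneg fun j (_ : j ∈ univ) => sq_nonneg (X i j)]

lemma transpose_mul_diagonal_mul_apply_self [DecidableEq m] (l : m → ℝ) (W : Matrix m k ℝ)
    (j : k) : (Wᵀ * diagonal l * W) j j = ∑ i, l i * W i j ^ 2 := by
  rw [mul_apply]
  refine sum_congr rfl fun i _ => ?_
  rw [mul_diagonal, transpose_apply]
  ring

lemma transpose_submatrix_mul_submatrix {R k' : Type*} [Semiring R] (W : Matrix m k R)
    (e : k' → k) : (W.submatrix id e)ᵀ * W.submatrix id e = (Wᵀ * W).submatrix e e := by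
  rw [submatrix_mul _ _ _ id _ Function.bijective_id, transpose_submatrix]

lemma transpose_submatrix_mul_mul_submatrix {R k' : Type*} [Semiring R] (W : Matrix m k R)
    (M : Matrix m m R) (e : k' → k) :
    (W.submatrix id e)ᵀ * M * W.submatrix id e = (Wᵀ * M * W).submatrix e e := by
  rw [submatrix_mul _ _ _ id _ Function.bijective_id,
    submatrix_mul _ _ _ id _ Function.bijective_id, transpose_submatrix, submatrix_id_id]

lemma PosDef.pos_of_eq_mul_diagonal_mul_transpose [DecidableEq m]
    {C U : Matrix m m ℝ} {l : m → ℝ} (hC : C.PosDef) (hU : Uᵀ * U = 1)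
    (hspec : C = U * diagonal l * Uᵀ) (i : m) : 0 < l i := by
  have hinj : Function.Injective U.mulVec := fun x y hxy => by
    simpa [mulVec_mulVec, hU] using congrArg (Uᵀ *ᵥ ·) hxy
  have hdiag : Uᵀ * C * U = diagonal l := by
    rw [hspec, ← Matrix.mul_assoc, ← Matrix.mul_assoc, hU, Matrix.one_mul, Matrix.mul_assoc, hU,
      Matrix.mul_one]
  have hpos := hC.conjTranspose_mul_mul_same hinj
  rw [conjTranspose_eq_transpose_of_trivial, hdiag, posDef_diagonal_iff] at hpos
  exact hpos i

end Matrix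

lemma trace_transpose_mul_diagonal_mul_le {n p : ℕ} {l : Fin n → ℝ} (hl : Antitone l)
    (hpn : p ≤ n) {W : Matrix (Fin n) (Fin p) ℝ} (hW : Wᵀ * W = 1) :
    (Wᵀ * diagonal l * W).trace ≤ ∑ j : Fin p, l (Fin.castLE hpn j) := by
  rcases Nat.eq_zero_or_pos p with rfl | hp
  · simp [trace]
  set S := univ.map (Fin.castLEEmb hpn)
  have hmem : ∀ i, i ∈ S ↔ (i : ℕ) < p := Fin.mem_map_castLEEmb_univ hpn
  have hsq : ∑ i, ∑ j, W i j ^ 2 = #S := by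
    rw [sum_comm]
    simp [sum_sq_col_eq_one hW, S]
  calc (Wᵀ * diagonal l * W).trace = ∑ i, l i * ∑ j, W i j ^ 2 := by
        simp only [trace, Matrix.diag, transpose_mul_diagonal_mul_apply_self, mul_sum]
        exact sum_comm
    _ ≤ ∑ i ∈ S, l i :=
        sum_mul_le_sum_of_threshold S (c := l ⟨p - 1, by omega⟩)
          (fun i hi => hl (Fin.le_def.2
            (show (i : ℕ) ≤ p - 1 by have := (hmem i).1 hi; omega)))
          (fun i hi => hl (Fin.le_def.2
            (show p - 1 ≤ (i : ℕ) by have := (hmem i).not.1 hi; omega)))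
          (fun i => sum_nonneg fun j _ => sq_nonneg _) (sum_sq_row_le_one hW) hsq
    _ = ∑ j : Fin p, l (Fin.castLE hpn j) := sum_map _ _ _

lemma sum_mul_diag_transpose_mul_diagonal_mul_le {n : ℕ} {l : Fin n → ℝ} (hl : Antitone l) :
    ∀ {p : ℕ} (hpn : p ≤ n) {w : Fin p → ℝ}, (∀ j, 0 ≤ w j) → Antitone w →
      ∀ {W : Matrix (Fin n) (Fin p) ℝ}, Wᵀ * W = 1 →
        ∑ j, w j * (Wᵀ * diagonal l * W) j j ≤ ∑ j, w j * l (Fin.castLE hpn j)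
  | 0, _, _, _, _, _, _ => by simp
  | p + 1, hpn, w, hw0, hw, W, hW => by
    -- Peel off the smallest weight `c`: the weights `w - c` vanish on the last column, so the
    -- first `p` columns carry the induction, and `c` multiplies Ky Fan's bound for all columns.
    set c := w (Fin.last p)
    have hsplit : ∀ q : Fin (p + 1) → ℝ,
        ∑ j, w j * q j = ∑ j : Fin p, (w j.castSucc - c) * q j.castSucc + c * ∑ j, q j := by
      intro q
      simp only [Fin.sum_univ_castSucc, sub_mul, sum_sub_distrib, mul_add, mul_sum]
      ring
    set W' := W.submatrix id Fin.castSucc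
    have hW' : W'ᵀ * W' = 1 := by
      rw [transpose_submatrix_mul_submatrix, hW, submatrix_one _ (Fin.castSucc_injective p)]
    have hrest := sum_mul_diag_transpose_mul_diagonal_mul_le hl (p := p) (by omega)
      (w := fun j => w j.castSucc - c) (fun j => sub_nonneg.2 (hw (Fin.le_last _)))
      (fun i j hij => sub_le_sub_right (hw (Fin.castSucc_le_castSucc_iff.2 hij)) c) hW'
    have hall := trace_transpose_mul_diagonal_mul_le hl hpn hW
    rw [hsplit, hsplit]
    simp only [W', transpose_submatrix_mul_mul_submatrix, submatrix_apply] at hrest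
    exact add_le_add hrest (mul_le_mul_of_nonneg_left hall (hw0 _))

noncomputable def ppcaCov {n p : ℕ} (X : Matrix (Fin n) (Fin p) ℝ) (α : Fin p → ℝ) (σ2 : ℝ) :
    Matrix (Fin n) (Fin n) ℝ :=
  X * diagonal α * Xᵀ + σ2 • 1

lemma ppcaCov_submatrix_equiv {n p : ℕ} (X : Matrix (Fin n) (Fin p) ℝ) (α : Fin p → ℝ) (σ2 : ℝ)
    (π : Fin p ≃ Fin p) : ppcaCov (X.submatrix id π) (α ∘ π) σ2 = ppcaCov X α σ2 := by
  rw [ppcaCov, ppcaCov, ← submatrix_diagonal_equiv, transpose_submatrix, submatrix_mul_equiv,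
    submatrix_mul_equiv, submatrix_id_id]

section ppcaCov

variable {n p : ℕ} {X : Matrix (Fin n) (Fin p) ℝ} {α : Fin p → ℝ} {σ2 : ℝ}

lemma det_ppcaCov (hX : Xᵀ * X = 1) (hσ : σ2 ≠ 0) :
    (ppcaCov X α σ2).det = σ2 ^ n * ∏ j, (1 + α j / σ2) := by
  have hK : ppcaCov X α σ2 = σ2 • (1 + X * diagonal (fun j => α j / σ2) * Xᵀ) := by
    rw [ppcaCov, smul_add, smul_one_eq_diagonal, ← Matrix.smul_mul, ← Matrix.mul_smul,
      ← diagonal_smul, add_comm]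
    congr; funext j; simp [field]
  rw [hK, det_smul, Matrix.mul_assoc, det_one_add_mul_comm, Matrix.mul_assoc, hX,
    Matrix.mul_one, ← diagonal_one, diagonal_add, det_diagonal, Fintype.card_fin]

lemma inv_ppcaCov (hX : Xᵀ * X = 1) (hσ : σ2 ≠ 0) (hα : ∀ j, α j + σ2 ≠ 0) :
    (ppcaCov X α σ2)⁻¹ = σ2⁻¹ • 1 - X * diagonal (fun j => σ2⁻¹ - (α j + σ2)⁻¹) * Xᵀ := by
  refine inv_eq_right_inv ?_
  set d : Fin p → ℝ := fun j => σ2⁻¹ - (α j + σ2)⁻¹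
  have hsandwich : ∀ a b : Fin p → ℝ,
      X * diagonal a * Xᵀ * (X * diagonal b * Xᵀ) = X * diagonal (fun j => a j * b j) * Xᵀ := by
    intro a b
    rw [← diagonal_mul_diagonal]
    simp only [Matrix.mul_assoc]
    rw [← Matrix.mul_assoc Xᵀ X, hX, Matrix.one_mul]
  have hsmul : ∀ (c : ℝ) (a : Fin p → ℝ),
      X * diagonal (fun j => c * a j) * Xᵀ = c • (X * diagonal a * Xᵀ) := by
    intro c a
    rw [← Matrix.smul_mul, ← Matrix.mul_smul, ← diagonal_smul]
    rfl
  have hzero : (fun j => σ2⁻¹ * α j - α j * d j - σ2 * d j) = 0 := by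
    funext j
    have := hα j
    simp only [d, Pi.zero_apply]
    field_simp
    ring
  have hexpand : ppcaCov X α σ2 * (σ2⁻¹ • 1 - X * diagonal d * Xᵀ)
      = 1 + X * diagonal (fun j => σ2⁻¹ * α j - α j * d j - σ2 * d j) * Xᵀ := by
    conv_rhs => rw [← diagonal_sub, ← diagonal_sub, Matrix.mul_sub, Matrix.mul_sub,
      Matrix.sub_mul, Matrix.sub_mul, hsmul, hsmul, ← hsandwich]
    rw [ppcaCov]
    simp only [add_mul, mul_sub, smul_add, smul_mul_assoc, mul_smul_comm, mul_one, one_mul,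
      smul_smul, inv_mul_cancel₀ hσ, one_smul]
    abel
  rw [hexpand, hzero, diagonal_zero', Matrix.mul_zero, Matrix.zero_mul, add_zero]

lemma negLogLik_ppcaCov (C : Matrix (Fin n) (Fin n) ℝ) (hX : Xᵀ * X = 1) (hσ : σ2 ≠ 0)
    (hα : ∀ j, α j + σ2 ≠ 0) :
    negLogLik (ppcaCov X α σ2) C = ((n : ℝ) - p) * Real.log σ2 + ∑ j, Real.log (α j + σ2)
      + C.trace / σ2 - ∑ j, (σ2⁻¹ - (α j + σ2)⁻¹) * (Xᵀ * C * X) j j := by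
  have hfactor : ∀ j, 1 + α j / σ2 = (α j + σ2) / σ2 := fun j => by field_simp; ring
  have hlogdet : Real.log (ppcaCov X α σ2).det
      = ((n : ℝ) - p) * Real.log σ2 + ∑ j, Real.log (α j + σ2) := by
    rw [det_ppcaCov hX hσ, Real.log_mul (pow_ne_zero _ hσ), Real.log_pow, Real.log_prod]
    · simp only [hfactor, Real.log_div (hα _) hσ, sum_sub_distrib, sum_const, card_univ,
        Fintype.card_fin, nsmul_eq_mul]
      ring
    · exact fun j _ => by rw [hfactor]; exact div_ne_zero (hα j) hσ
    · exact prod_ne_zero_iff.2 fun j _ => by rw [hfactor]; exact div_ne_zero (hα j) hσ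
  have htrace : ((ppcaCov X α σ2)⁻¹ * C).trace
      = C.trace / σ2 - ∑ j, (σ2⁻¹ - (α j + σ2)⁻¹) * (Xᵀ * C * X) j j := by
    rw [inv_ppcaCov hX hσ hα, Matrix.sub_mul, trace_sub, Matrix.smul_mul, Matrix.one_mul,
      trace_smul, smul_eq_mul, inv_mul_eq_div, Matrix.mul_assoc, trace_mul_comm,
      Matrix.mul_assoc, ← Matrix.mul_assoc Xᵀ, ← Matrix.mul_assoc]
    simp only [trace, Matrix.diag, mul_diagonal, mul_comm]
  rw [negLogLik, hlogdet, htrace]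
  ring

end ppcaCov

noncomputable def ppcaNoise {n : ℕ} (l : Fin n → ℝ) (p : ℕ) : ℝ :=
  (∑ j ∈ univ.filter (fun j : Fin n => p ≤ (j : ℕ)), l j) / (n - p)

section ppcaNoise

variable {n p : ℕ} {l : Fin n → ℝ}

lemma sum_filter_le_eq_mul_ppcaNoise (hpn : p < n) :
    ∑ j ∈ univ.filter (fun j : Fin n => p ≤ (j : ℕ)), l j = (n - p) * ppcaNoise l p := by
  have : (0 : ℝ) < n - p := sub_pos.2 (by exact_mod_cast hpn)
  rw [ppcaNoise, mul_div_cancel₀ _ this.ne']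

lemma ppcaNoise_pos (hl : ∀ i, 0 < l i) (hpn : p < n) : 0 < ppcaNoise l p :=
  div_pos (sum_pos (fun i _ => hl i) ⟨⟨p, hpn⟩, by simp⟩) (sub_pos.2 (by exact_mod_cast hpn))

lemma ppcaNoise_lt {c : ℝ} (hpn : p < n) (hle : ∀ i : Fin n, p ≤ (i : ℕ) → l i ≤ c)
    (hlt : ∃ i : Fin n, p ≤ (i : ℕ) ∧ l i < c) : ppcaNoise l p < c := by
  have hnp : (0 : ℝ) < n - p := sub_pos.2 (by exact_mod_cast hpn)
  obtain ⟨i, hip, hi⟩ := hlt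
  have hsum := sum_lt_sum (fun j hj => hle j (mem_filter.1 hj).2)
    ⟨i, mem_filter.2 ⟨mem_univ i, hip⟩, hi⟩
  rw [sum_const, Fin.card_filter_le_val hpn.le, nsmul_eq_mul, Nat.cast_sub hpn.le] at hsum
  rwa [ppcaNoise, div_lt_iff₀' hnp]

end ppcaNoise

section ppcaOptimum

variable {n p : ℕ} {C U : Matrix (Fin n) (Fin n) ℝ} {l : Fin n → ℝ}

lemma trace_eq_sum_castLE_add_mul_ppcaNoise (hU : Uᵀ * U = 1)
    (hspec : C = U * diagonal l * Uᵀ) (hpn : p < n) :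
    C.trace = ∑ j : Fin p, l (Fin.castLE hpn.le j) + (n - p) * ppcaNoise l p := by
  rw [hspec, trace_mul_comm, ← Matrix.mul_assoc, hU, Matrix.one_mul, trace_diagonal,
    ← Fin.sum_castLE_add_sum_filter_le hpn.le, sum_filter_le_eq_mul_ppcaNoise hpn]

lemma negLogLik_ppcaCov_top (hl : ∀ i, 0 < l i) (hU : Uᵀ * U = 1)
    (hspec : C = U * diagonal l * Uᵀ) (hpn : p < n) :
    negLogLik (ppcaCov (U.submatrix id (Fin.castLE hpn.le))
        (fun j => l (Fin.castLE hpn.le j) - ppcaNoise l p) (ppcaNoise l p)) C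
      = ∑ j : Fin p, Real.log (l (Fin.castLE hpn.le j)) + (n - p) * Real.log (ppcaNoise l p)
        + n := by
  have hσ := ppcaNoise_pos hl hpn
  have hinj := Fin.castLE_injective hpn.le
  have hXh : (U.submatrix id (Fin.castLE hpn.le))ᵀ * U.submatrix id (Fin.castLE hpn.le) = 1 := by
    rw [transpose_submatrix_mul_submatrix, hU, submatrix_one _ hinj]
  have hq : (U.submatrix id (Fin.castLE hpn.le))ᵀ * C * U.submatrix id (Fin.castLE hpn.le)
      = diagonal (l ∘ Fin.castLE hpn.le) := by
    rw [transpose_submatrix_mul_mul_submatrix, hspec, ← Matrix.mul_assoc, ← Matrix.mul_assoc, hU,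
      Matrix.one_mul, Matrix.mul_assoc, hU, Matrix.mul_one, submatrix_diagonal _ _ hinj]
  have hterm : ∀ j : Fin p, ((ppcaNoise l p)⁻¹ - (l (Fin.castLE hpn.le j))⁻¹)
      * l (Fin.castLE hpn.le j) = (ppcaNoise l p)⁻¹ * l (Fin.castLE hpn.le j) - 1 := fun j => by
    have := (hl (Fin.castLE hpn.le j)).ne'
    field_simp
  rw [negLogLik_ppcaCov C hXh hσ.ne' (fun j => by simpa using (hl _).ne'), hq,
    trace_eq_sum_castLE_add_mul_ppcaNoise hU hspec hpn]
  simp only [sub_add_cancel, diagonal_apply_eq, Function.comp_apply, hterm, sum_sub_distrib,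
    ← mul_sum, sum_const, card_univ, Fintype.card_fin, nsmul_eq_mul, mul_one]
  field_simp
  ring

lemma negLogLik_ppcaCov_ge_of_antitone (hl : ∀ i, 0 < l i) (hlanti : Antitone l)
    (hU : Uᵀ * U = 1) (hU' : U * Uᵀ = 1) (hspec : C = U * diagonal l * Uᵀ) (hpn : p < n)
    {X : Matrix (Fin n) (Fin p) ℝ} {α : Fin p → ℝ} {σ2 : ℝ} (hX : Xᵀ * X = 1)
    (hα : ∀ j, 0 ≤ α j) (hαanti : Antitone α) (hσ : 0 < σ2) :
    ∑ j : Fin p, Real.log (l (Fin.castLE hpn.le j)) + (n - p) * Real.log (ppcaNoise l p) + n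
      ≤ negLogLik (ppcaCov X α σ2) C := by
  have hnp : (0 : ℝ) ≤ n - p := sub_nonneg.2 (by exact_mod_cast hpn.le)
  have hμ : ∀ j, 0 < α j + σ2 := fun j => by linarith [hα j]
  set w : Fin p → ℝ := fun j => σ2⁻¹ - (α j + σ2)⁻¹
  have hw0 : ∀ j, 0 ≤ w j := fun j =>
    sub_nonneg.2 (inv_anti₀ hσ (le_add_of_nonneg_left (hα j)))
  have hwanti : Antitone w := fun i j hij =>
    sub_le_sub_left (inv_anti₀ (hμ j) (by linarith [hαanti hij])) _
  have hW : (Uᵀ * X)ᵀ * (Uᵀ * X) = 1 := by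
    rw [transpose_mul, transpose_transpose, Matrix.mul_assoc, ← Matrix.mul_assoc U, hU',
      Matrix.one_mul, hX]
  have hq : Xᵀ * C * X = (Uᵀ * X)ᵀ * diagonal l * (Uᵀ * X) := by
    rw [transpose_mul, transpose_transpose, hspec]
    simp only [Matrix.mul_assoc]
  have hweighted : ∑ j, w j * (Xᵀ * C * X) j j ≤ ∑ j, w j * l (Fin.castLE hpn.le j) :=
    hq ▸ sum_mul_diag_transpose_mul_diagonal_mul_le hlanti hpn.le hw0 hwanti hW
  have htop : ∀ j, Real.log (l (Fin.castLE hpn.le j)) + 1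
      ≤ Real.log (α j + σ2) + (σ2⁻¹ * l (Fin.castLE hpn.le j) - w j * l (Fin.castLE hpn.le j)) :=
    fun j => by
      convert log_add_one_le_log_add_div (hl (Fin.castLE hpn.le j)) (hμ j) using 2
      ring
  have hnoise := mul_le_mul_of_nonneg_left
    (log_add_one_le_log_add_div (ppcaNoise_pos hl hpn) hσ) hnp
  have hsum := sum_le_sum fun j (_ : j ∈ univ) => htop j
  simp only [sum_add_distrib, sum_sub_distrib, ← mul_sum, sum_const, card_univ, Fintype.card_fin,
    nsmul_eq_mul, mul_one] at hsum
  rw [negLogLik_ppcaCov C hX hσ.ne' (fun j => (hμ j).ne'),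
    trace_eq_sum_castLE_add_mul_ppcaNoise hU hspec hpn]
  have hsplit : (∑ j : Fin p, l (Fin.castLE hpn.le j) + (n - p) * ppcaNoise l p) / σ2
      = σ2⁻¹ * ∑ j : Fin p, l (Fin.castLE hpn.le j) + (n - p) * (ppcaNoise l p / σ2) := by ring
  linarith

lemma negLogLik_ppcaCov_ge (hl : ∀ i, 0 < l i) (hlanti : Antitone l)
    (hU : Uᵀ * U = 1) (hU' : U * Uᵀ = 1) (hspec : C = U * diagonal l * Uᵀ) (hpn : p < n)
    {X : Matrix (Fin n) (Fin p) ℝ} {α : Fin p → ℝ} {σ2 : ℝ} (hX : Xᵀ * X = 1)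
    (hα : ∀ j, 0 ≤ α j) (hσ : 0 < σ2) :
    ∑ j : Fin p, Real.log (l (Fin.castLE hpn.le j)) + (n - p) * Real.log (ppcaNoise l p) + n
      ≤ negLogLik (ppcaCov X α σ2) C := by
  set π := Tuple.sort (OrderDual.toDual ∘ α)
  have hπ : Antitone (α ∘ π) := monotone_toDual_comp_iff.1 (Tuple.monotone_sort _)
  have hXπ : (X.submatrix id π)ᵀ * X.submatrix id π = 1 := by
    rw [transpose_submatrix_mul_submatrix, hX, submatrix_one_equiv]
  rw [← ppcaCov_submatrix_equiv X α σ2 π]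
  exact negLogLik_ppcaCov_ge_of_antitone hl hlanti hU hU' hspec hpn hXπ (fun j => hα _) hπ hσ

end ppcaOptimum

/-- Probabilistic PCA: if `C = U diag(λ) Uᵀ` with `U` orthogonal and `λ` sorted decreasingly,
`1 ≤ p < n` and `λ_p > λ_j` for some `j > p`, then among all `K = X diag(α) Xᵀ + σ²·1` with
`X` orthonormal, `α_j ≥ 0`, `σ² > 0`, the minimizer of `log det K + tr(K⁻¹C)` is given by
taking the top-`p` eigenvectors, `σ̂² = (∑_{j>p} λ_j)/(n-p)`, `α̂_j = λ_j - σ̂² > 0`. -/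
theorem stmt8 {n : ℕ} (C : Matrix (Fin n) (Fin n) ℝ) (hC : C.PosDef)
    (l : Fin n → ℝ) (U : Matrix (Fin n) (Fin n) ℝ)
    (hlanti : Antitone l) (hU : Uᵀ * U = 1) (hU' : U * Uᵀ = 1)
    (hspec : C = U * Matrix.diagonal l * Uᵀ)
    (p : ℕ) (hpn : p < n)
    (hex : ∃ j : Fin n, p ≤ (j : ℕ) ∧ l j < l ⟨p - 1, by omega⟩) :
    let σh : ℝ := (∑ j ∈ Finset.univ.filter (fun j : Fin n => p ≤ (j : ℕ)), l j) / (n - p)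
    let Xh : Matrix (Fin n) (Fin p) ℝ := fun i j => U i ⟨j.1, lt_trans j.2 hpn⟩
    let ah : Fin p → ℝ := fun j => l ⟨j.1, lt_trans j.2 hpn⟩ - σh
    (∀ j, 0 < ah j) ∧
      ∀ (X : Matrix (Fin n) (Fin p) ℝ) (α : Fin p → ℝ) (σ2 : ℝ),
        Xᵀ * X = 1 → (∀ j, 0 ≤ α j) → 0 < σ2 →
        negLogLik (Xh * Matrix.diagonal ah * Xhᵀ + σh • 1) C ≤
          negLogLik (X * Matrix.diagonal α * Xᵀ + σ2 • 1) C := by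
  intro σh Xh ah
  have hl := hC.pos_of_eq_mul_diagonal_mul_transpose hU hspec
  refine ⟨fun j => sub_pos.2 (ppcaNoise_lt hpn (fun i hi => hlanti (Fin.le_def.2 ?_)) ?_),
    fun X α σ2 hX hα hσ => ?_⟩
  · show (j : ℕ) ≤ i
    omega
  · obtain ⟨i, hi, hlt⟩ := hex
    exact ⟨i, hi, hlt.trans_le (hlanti (Fin.le_def.2 (show (j : ℕ) ≤ p - 1 by omega)))⟩
  · calc negLogLik (Xh * Matrix.diagonal ah * Xhᵀ + σh • 1) C
        = _ := negLogLik_ppcaCov_top hl hU hspec hpn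
      _ ≤ _ := negLogLik_ppcaCov_ge hl hlanti hU hU' hspec hpn hX hα hσ
end

section
/- For K = Z B Zᵀ + σ²·1 with Z = U₁Γ₁Vᵀ a thin SVD and U = (U₁, U₂) orthogonal, the blocks K_{ij} = U_iᵀ K U_j satisfy K₁₂ = K₂₁ = 0, K₂₂ = σ²·1_{n−d}, and K₁₁ = Γ₁Vᵀ(B + σ² V Γ₁⁻² Vᵀ)VΓ₁; consequently log det K = log det K₁₁ + (n−d) log σ² and tr(K⁻¹C) = tr(K₁₁⁻¹C₁₁) + tr(C₂₂)/σ². -/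
/-!
`Zᵀ U₂ = 0`, so in the orthonormal basis `(U₁, U₂)` the matrix `K` is block diagonal with
`K₂₂ = σ²·1`. Hence `K⁻¹ = U₁ K₁₁⁻¹ U₁ᵀ + σ⁻² U₂ U₂ᵀ`, and the trace formula follows by cyclicity.
For the determinant, Sylvester's identity `det (σ²·1 + X B Xᵀ) = σ^{2n} det (1 + σ⁻² B XᵀX)`
is applied to both `K` (with `X = Z`) and `K₁₁` (with `X = U₁ᵀ Z`). These two matrices have the
same Gram matrix `XᵀX = ZᵀZ`, which gives `det K = σ^{2(n-d)} det K₁₁`. Since `B ⪰ 0`,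
`K₁₁ ≻ 0`, so its determinant is positive and `K₁₁` is invertible.
-/

open Matrix

theorem transpose_mul_conj_add_smul_one_mul {R n m p q : Type*} [CommRing R] [Fintype n]
    [Fintype m] [DecidableEq n] (Z : Matrix n m R) (B : Matrix m m R) (s : R)
    (U : Matrix n p R) (W : Matrix n q R) :
    Uᵀ * (Z * B * Zᵀ + s • 1) * W = Uᵀ * Z * B * (Wᵀ * Z)ᵀ + s • (Uᵀ * W) := by
  simp only [Matrix.mul_add, Matrix.add_mul, transpose_mul, transpose_transpose, Matrix.mul_smul,
    Matrix.smul_mul, Matrix.mul_one, Matrix.mul_assoc]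

section Orthonormal

variable {R n m p : Type*} [CommRing R] [Fintype n] [Fintype m] [Fintype p]
  {U₁ : Matrix n m R} {U₂ : Matrix n p R}

theorem eq_conj_add_conj_of_offDiag_eq_zero [DecidableEq n]
    (hcomplete : U₁ * U₁ᵀ + U₂ * U₂ᵀ = 1) {K : Matrix n n R}
    (h₁₂ : U₁ᵀ * K * U₂ = 0) (h₂₁ : U₂ᵀ * K * U₁ = 0) :
    K = U₁ * (U₁ᵀ * K * U₁) * U₁ᵀ + U₂ * (U₂ᵀ * K * U₂) * U₂ᵀ := calc
  K = (U₁ * U₁ᵀ + U₂ * U₂ᵀ) * K * (U₁ * U₁ᵀ + U₂ * U₂ᵀ) := by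
    rw [hcomplete, Matrix.one_mul, Matrix.mul_one]
  _ = U₁ * (U₁ᵀ * K * U₁) * U₁ᵀ + U₁ * (U₁ᵀ * K * U₂) * U₂ᵀ
      + (U₂ * (U₂ᵀ * K * U₁) * U₁ᵀ + U₂ * (U₂ᵀ * K * U₂) * U₂ᵀ) := by
    simp only [Matrix.mul_add, Matrix.add_mul, Matrix.mul_assoc]; abel
  _ = _ := by rw [h₁₂, h₂₁]; simp

theorem inv_conj_add_conj_of_orthonormal [DecidableEq n] [DecidableEq m] [DecidableEq p]
    (hU₁ : U₁ᵀ * U₁ = 1) (hU₂ : U₂ᵀ * U₂ = 1) (hU₁₂ : U₁ᵀ * U₂ = 0)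
    (hcomplete : U₁ * U₁ᵀ + U₂ * U₂ᵀ = 1) {A : Matrix m m R} {D : Matrix p p R}
    (hA : IsUnit A.det) (hD : IsUnit D.det) :
    (U₁ * A * U₁ᵀ + U₂ * D * U₂ᵀ)⁻¹ = U₁ * A⁻¹ * U₁ᵀ + U₂ * D⁻¹ * U₂ᵀ := by
  have hU₂₁ : U₂ᵀ * U₁ = 0 := by simpa using congrArg transpose hU₁₂
  refine inv_eq_right_inv ?_
  calc _ = U₁ * A * (U₁ᵀ * U₁) * A⁻¹ * U₁ᵀ + U₁ * A * (U₁ᵀ * U₂) * D⁻¹ * U₂ᵀ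
      + (U₂ * D * (U₂ᵀ * U₁) * A⁻¹ * U₁ᵀ + U₂ * D * (U₂ᵀ * U₂) * D⁻¹ * U₂ᵀ) := by
        simp only [Matrix.mul_add, Matrix.add_mul, Matrix.mul_assoc]; abel
    _ = 1 := by
      rw [hU₁, hU₂, hU₁₂, hU₂₁]
      simpa [mul_nonsing_inv_cancel_right (h := hA), mul_nonsing_inv_cancel_right (h := hD)]
        using hcomplete

theorem trace_conj_add_conj_mul (A : Matrix m m R) (D : Matrix p p R) (C : Matrix n n R) :
    ((U₁ * A * U₁ᵀ + U₂ * D * U₂ᵀ) * C).trace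
      = (A * (U₁ᵀ * C * U₁)).trace + (D * (U₂ᵀ * C * U₂)).trace := by
  simp only [Matrix.add_mul, trace_add, Matrix.mul_assoc]
  rw [trace_mul_comm U₁, trace_mul_comm U₂]
  simp only [Matrix.mul_assoc]

end Orthonormal

theorem det_conj_add_smul_one {K n m : Type*} [Field K] [Fintype n] [Fintype m]
    [DecidableEq n] [DecidableEq m] (X : Matrix n m K) (B : Matrix m m K) {s : K} (hs : s ≠ 0) :
    (X * B * Xᵀ + s • 1).det = s ^ Fintype.card n * (1 + s⁻¹ • (B * (Xᵀ * X))).det := by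
  have : X * B * Xᵀ + s • 1 = s • (1 + (s⁻¹ • X) * (B * Xᵀ)) := by
    rw [smul_add, Matrix.smul_mul, smul_smul, mul_inv_cancel₀ hs, one_smul, Matrix.mul_assoc,
      add_comm]
  rw [this, det_smul, det_one_add_mul_comm, Matrix.mul_smul, Matrix.mul_assoc]

theorem Matrix.PosSemidef.posDef_conj_add_smul_one {n m : Type*} [Fintype n] [Fintype m]
    [DecidableEq n] {B : Matrix m m ℝ} (hB : B.PosSemidef) (X : Matrix n m ℝ) {s : ℝ}
    (hs : 0 < s) : (X * B * Xᵀ + s • 1).PosDef := by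
  simpa using PosDef.posSemidef_add (hB.mul_mul_conjTranspose_same X) (PosDef.one.smul hs)

theorem diagonal_mul_transpose_mul_add_smul_inv_sq {K m : Type*} [Field K] [Fintype m]
    [DecidableEq m] {g : m → K} (hg : ∀ i, g i ≠ 0) {V : Matrix m m K} (hV : Vᵀ * V = 1)
    (B : Matrix m m K) (s : K) :
    diagonal g * Vᵀ * (B + s • (V * diagonal (fun i => (g i ^ 2)⁻¹) * Vᵀ)) * V * diagonal g
      = diagonal g * Vᵀ * B * (diagonal g * Vᵀ)ᵀ + s • 1 := by
  have hΓ : diagonal g * diagonal (fun i => (g i ^ 2)⁻¹) * diagonal g = 1 := by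
    rw [diagonal_mul_diagonal, diagonal_mul_diagonal, ← diagonal_one]
    congr 1
    funext i
    field_simp [hg i]
  have cancel (X : Matrix m m K) : Vᵀ * (V * X) = X := by
    rw [← Matrix.mul_assoc, hV, Matrix.one_mul]
  simp only [transpose_mul, diagonal_transpose, transpose_transpose, Matrix.mul_add,
    Matrix.add_mul, Matrix.mul_smul, Matrix.smul_mul, Matrix.mul_assoc, cancel]
  simp only [← Matrix.mul_assoc, hΓ]

theorem stmt13_general {d e : ℕ}
    (Z : Matrix (Fin (d + e)) (Fin d) ℝ)
    (U₁ : Matrix (Fin (d + e)) (Fin d) ℝ) (U₂ : Matrix (Fin (d + e)) (Fin e) ℝ)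
    (g : Fin d → ℝ) (V : Matrix (Fin d) (Fin d) ℝ)
    (hU1 : U₁ᵀ * U₁ = 1) (hU2 : U₂ᵀ * U₂ = 1) (hU12 : U₁ᵀ * U₂ = 0)
    (hcomplete : U₁ * U₁ᵀ + U₂ * U₂ᵀ = 1)
    (hg : ∀ i, 0 < g i) (hV : Vᵀ * V = 1)
    (hZ : Z = U₁ * Matrix.diagonal g * Vᵀ)
    (B : Matrix (Fin d) (Fin d) ℝ) (hB : B.PosSemidef)
    (σ2 : ℝ) (hσ : 0 < σ2)
    (C : Matrix (Fin (d + e)) (Fin (d + e)) ℝ) :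
    let K : Matrix (Fin (d + e)) (Fin (d + e)) ℝ := Z * B * Zᵀ + σ2 • 1
    let Γ₁ : Matrix (Fin d) (Fin d) ℝ := Matrix.diagonal g
    let K₁₁ : Matrix (Fin d) (Fin d) ℝ := U₁ᵀ * K * U₁
    U₁ᵀ * K * U₂ = 0 ∧ U₂ᵀ * K * U₁ = 0 ∧
      U₂ᵀ * K * U₂ = σ2 • 1 ∧
      K₁₁ = Γ₁ * Vᵀ *
        (B + σ2 • (V * Matrix.diagonal (fun i => ((g i) ^ 2)⁻¹) * Vᵀ)) * V * Γ₁ ∧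
      Real.log K.det = Real.log K₁₁.det + e * Real.log σ2 ∧
      (K⁻¹ * C).trace = (K₁₁⁻¹ * (U₁ᵀ * C * U₁)).trace + (U₂ᵀ * C * U₂).trace / σ2 := by
  intro K Γ₁ K₁₁
  have hU21 : U₂ᵀ * U₁ = 0 := by simpa using congrArg transpose hU12
  have hU1Z : U₁ᵀ * Z = Γ₁ * Vᵀ := by
    rw [hZ, Matrix.mul_assoc, ← Matrix.mul_assoc, hU1, Matrix.one_mul]
  have hU2Z : U₂ᵀ * Z = 0 := by
    rw [hZ, Matrix.mul_assoc, ← Matrix.mul_assoc, hU21, Matrix.zero_mul]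
  have hK12 : U₁ᵀ * K * U₂ = 0 := by simp [K, transpose_mul_conj_add_smul_one_mul, hU2Z, hU12]
  have hK21 : U₂ᵀ * K * U₁ = 0 := by simp [K, transpose_mul_conj_add_smul_one_mul, hU2Z, hU21]
  have hK22 : U₂ᵀ * K * U₂ = σ2 • 1 := by
    simp [K, transpose_mul_conj_add_smul_one_mul, hU2Z, hU2]
  have hK11 : K₁₁ = Γ₁ * Vᵀ * B * (Γ₁ * Vᵀ)ᵀ + σ2 • 1 := by
    simp only [K₁₁, K, transpose_mul_conj_add_smul_one_mul, hU1Z, hU1]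
  have hK11pd : K₁₁.PosDef := hK11 ▸ hB.posDef_conj_add_smul_one _ hσ
  have hgram : Zᵀ * Z = (Γ₁ * Vᵀ)ᵀ * (Γ₁ * Vᵀ) := by
    rw [hZ, Matrix.mul_assoc, transpose_mul, Matrix.mul_assoc, ← Matrix.mul_assoc U₁ᵀ, hU1,
      Matrix.one_mul]
  have hdet : K.det = σ2 ^ e * K₁₁.det := by
    rw [det_conj_add_smul_one _ _ hσ.ne', hK11, det_conj_add_smul_one _ _ hσ.ne', hgram,
      Fintype.card_fin, Fintype.card_fin]
    ring
  have hσinv : (σ2 • 1 : Matrix (Fin e) (Fin e) ℝ)⁻¹ = σ2⁻¹ • 1 :=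
    inv_eq_left_inv (by simp [smul_smul, hσ.ne'])
  have hKinv : K⁻¹ = U₁ * K₁₁⁻¹ * U₁ᵀ + U₂ * (σ2⁻¹ • 1 : Matrix (Fin e) (Fin e) ℝ) * U₂ᵀ := by
    rw [eq_conj_add_conj_of_offDiag_eq_zero hcomplete hK12 hK21, hK22, ← hσinv]
    exact inv_conj_add_conj_of_orthonormal hU1 hU2 hU12 hcomplete
      hK11pd.det_pos.ne'.isUnit (by simp [hσ.ne'])
  refine ⟨hK12, hK21, hK22, hK11.trans (diagonal_mul_transpose_mul_add_smul_inv_sq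
    (fun i => (hg i).ne') hV B σ2).symm, ?_, ?_⟩
  · rw [hdet, Real.log_mul (by positivity) hK11pd.det_pos.ne', Real.log_pow, add_comm]
  · rw [hKinv, trace_conj_add_conj_mul, Matrix.smul_mul, Matrix.one_mul, trace_smul,
      smul_eq_mul, div_eq_inv_mul]

/-- Block structure of `K = Z B Zᵀ + σ²·1` in the SVD basis `(U₁, U₂)` of `Z = U₁Γ₁Vᵀ`:
`K₁₂ = K₂₁ = 0`, `K₂₂ = σ²·1`, `K₁₁ = Γ₁Vᵀ(B + σ² VΓ₁⁻²Vᵀ)VΓ₁`, and consequently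
`log det K = log det K₁₁ + (n−d) log σ²` and `tr(K⁻¹C) = tr(K₁₁⁻¹C₁₁) + tr(C₂₂)/σ²`. -/
theorem stmt13 {d e : ℕ}
    (Z : Matrix (Fin (d + e)) (Fin d) ℝ)
    (U₁ : Matrix (Fin (d + e)) (Fin d) ℝ) (U₂ : Matrix (Fin (d + e)) (Fin e) ℝ)
    (g : Fin d → ℝ) (V : Matrix (Fin d) (Fin d) ℝ)
    (hU1 : U₁ᵀ * U₁ = 1) (hU2 : U₂ᵀ * U₂ = 1) (hU12 : U₁ᵀ * U₂ = 0)
    (hcomplete : U₁ * U₁ᵀ + U₂ * U₂ᵀ = 1)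
    (hg : ∀ i, 0 < g i) (hV : Vᵀ * V = 1) (hV' : V * Vᵀ = 1)
    (hZ : Z = U₁ * Matrix.diagonal g * Vᵀ)
    (B : Matrix (Fin d) (Fin d) ℝ) (hB : B.PosSemidef)
    (σ2 : ℝ) (hσ : 0 < σ2)
    (C : Matrix (Fin (d + e)) (Fin (d + e)) ℝ) :
    let K : Matrix (Fin (d + e)) (Fin (d + e)) ℝ := Z * B * Zᵀ + σ2 • 1
    let Γ₁ : Matrix (Fin d) (Fin d) ℝ := Matrix.diagonal g
    let K₁₁ : Matrix (Fin d) (Fin d) ℝ := U₁ᵀ * K * U₁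
    U₁ᵀ * K * U₂ = 0 ∧ U₂ᵀ * K * U₁ = 0 ∧
      U₂ᵀ * K * U₂ = σ2 • 1 ∧
      K₁₁ = Γ₁ * Vᵀ *
        (B + σ2 • (V * Matrix.diagonal (fun i => ((g i) ^ 2)⁻¹) * Vᵀ)) * V * Γ₁ ∧
      Real.log K.det = Real.log K₁₁.det + e * Real.log σ2 ∧
      (K⁻¹ * C).trace = (K₁₁⁻¹ * (U₁ᵀ * C * U₁)).trace + (U₂ᵀ * C * U₂).trace / σ2 :=
  stmt13_general Z U₁ U₂ g V hU1 hU2 hU12 hcomplete hg hV hZ B hB σ2 hσ C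
end

section
/- Trace decomposition: with K̂ = Z B̂ Zᵀ + Z D̂ X̂ᵀ + X̂ D̂ᵀ Zᵀ + X̂ Â X̂ᵀ + σ̂²·1 given by the lvreml estimates B̂ = VΓ₁⁻¹(C₁₁ − σ̂²·1)Γ₁⁻¹Vᵀ, D̂ = VΓ₁⁻¹C₁₂W_p, X̂ = U₂W_p, Â = diag(λ₁−σ̂²,...,λ_p−σ̂²), σ̂² = (1/(n−d−p))Σ_{j>p}λ_j, one has tr(C) = tr(K̂) = tr(Z B̂ Zᵀ) + tr(X̂ Â X̂ᵀ) + n σ̂², with tr(Z B̂ Zᵀ) = tr(C₁₁) − d σ̂² and tr(X̂ Â X̂ᵀ) = tr(C₂₂) − (n−d) σ̂². -/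
open Matrix

/-- Trace decomposition for the lvreml estimates: `tr(C) = tr(K̂) =
tr(Z B̂ Zᵀ) + tr(X̂ Â X̂ᵀ) + n σ̂²`, with `tr(Z B̂ Zᵀ) = tr(C₁₁) − d σ̂²` and
`tr(X̂ Â X̂ᵀ) = tr(C₂₂) − (n−d) σ̂²`. -/
theorem stmt16 {d e p : ℕ} (hpe : p < e)
    (Z : Matrix (Fin (d + e)) (Fin d) ℝ)
    (U₁ : Matrix (Fin (d + e)) (Fin d) ℝ) (U₂ : Matrix (Fin (d + e)) (Fin e) ℝ)
    (g : Fin d → ℝ) (V : Matrix (Fin d) (Fin d) ℝ)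
    (hU1 : U₁ᵀ * U₁ = 1) (hU2 : U₂ᵀ * U₂ = 1) (hU12 : U₁ᵀ * U₂ = 0)
    (hcomplete : U₁ * U₁ᵀ + U₂ * U₂ᵀ = 1)
    (hg : ∀ i, 0 < g i) (hV : Vᵀ * V = 1) (hV' : V * Vᵀ = 1)
    (hZ : Z = U₁ * Matrix.diagonal g * Vᵀ)
    (C : Matrix (Fin (d + e)) (Fin (d + e)) ℝ) (hC : C.PosDef)
    (l : Fin e → ℝ) (W : Matrix (Fin e) (Fin e) ℝ)
    (hlanti : Antitone l) (hW : Wᵀ * W = 1) (hW' : W * Wᵀ = 1)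
    (hspec : U₂ᵀ * C * U₂ = W * Matrix.diagonal l * Wᵀ) :
    let C₁₁ : Matrix (Fin d) (Fin d) ℝ := U₁ᵀ * C * U₁
    let C₁₂ : Matrix (Fin d) (Fin e) ℝ := U₁ᵀ * C * U₂
    let C₂₂ : Matrix (Fin e) (Fin e) ℝ := U₂ᵀ * C * U₂
    let σh : ℝ := (∑ j ∈ Finset.univ.filter (fun j : Fin e => p ≤ (j : ℕ)), l j) / (e - p)
    let Γinv : Matrix (Fin d) (Fin d) ℝ := Matrix.diagonal (fun i => (g i)⁻¹)
    let Wp : Matrix (Fin e) (Fin p) ℝ := fun i j => W i ⟨j.1, lt_trans j.2 hpe⟩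
    let Bh : Matrix (Fin d) (Fin d) ℝ := V * Γinv * (C₁₁ - σh • 1) * Γinv * Vᵀ
    let Dh : Matrix (Fin d) (Fin p) ℝ := V * Γinv * C₁₂ * Wp
    let Xh : Matrix (Fin (d + e)) (Fin p) ℝ := U₂ * Wp
    let Ah : Matrix (Fin p) (Fin p) ℝ :=
      Matrix.diagonal (fun j : Fin p => l ⟨j.1, lt_trans j.2 hpe⟩ - σh)
    let Kh : Matrix (Fin (d + e)) (Fin (d + e)) ℝ :=
      Z * Bh * Zᵀ + Z * Dh * Xhᵀ + Xh * Dhᵀ * Zᵀ + Xh * Ah * Xhᵀ + σh • 1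
    (Z * Bh * Zᵀ).trace = C₁₁.trace - d * σh ∧
      (Xh * Ah * Xhᵀ).trace = C₂₂.trace - e * σh ∧
      Kh.trace = (Z * Bh * Zᵀ).trace + (Xh * Ah * Xhᵀ).trace + (d + e) * σh ∧
      C.trace = Kh.trace := by
  intro C₁₁ C₁₂ C₂₂ σh Γinv Wp Bh Dh Xh Ah Kh
  have hgne : ∀ i, g i ≠ 0 := fun i => (hg i).ne'
  -- cancellation lemmas
  have cV : ∀ {m : Type} (X : Matrix (Fin d) m ℝ), Vᵀ * (V * X) = X := by
    intro m X; rw [← Matrix.mul_assoc, hV, Matrix.one_mul]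
  have cV' : ∀ {m : Type} (X : Matrix (Fin d) m ℝ), V * (Vᵀ * X) = X := by
    intro m X; rw [← Matrix.mul_assoc, hV', Matrix.one_mul]
  have hΓ1 : Matrix.diagonal g * Γinv = 1 := by
    show Matrix.diagonal g * Matrix.diagonal (fun i => (g i)⁻¹) = 1
    rw [Matrix.diagonal_mul_diagonal]
    rw [show (fun i => g i * (g i)⁻¹) = fun _ => (1:ℝ) from funext fun i => mul_inv_cancel₀ (hgne i)]
    exact Matrix.diagonal_one
  have hΓ2 : Γinv * Matrix.diagonal g = 1 := by
    show Matrix.diagonal (fun i => (g i)⁻¹) * Matrix.diagonal g = 1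
    rw [Matrix.diagonal_mul_diagonal]
    rw [show (fun i => (g i)⁻¹ * g i) = fun _ => (1:ℝ) from funext fun i => inv_mul_cancel₀ (hgne i)]
    exact Matrix.diagonal_one
  have cΓ : ∀ {m : Type} (X : Matrix (Fin d) m ℝ), Matrix.diagonal g * (Γinv * X) = X := by
    intro m X; rw [← Matrix.mul_assoc, hΓ1, Matrix.one_mul]
  have cΓ' : ∀ {m : Type} (X : Matrix (Fin d) m ℝ), Γinv * (Matrix.diagonal g * X) = X := by
    intro m X; rw [← Matrix.mul_assoc, hΓ2, Matrix.one_mul]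
  have hWp : Wpᵀ * Wp = 1 := by
    ext i j
    have h := congrFun (congrFun hW ⟨i.1, lt_trans i.2 hpe⟩) ⟨j.1, lt_trans j.2 hpe⟩
    simp only [Matrix.mul_apply, Matrix.transpose_apply, Matrix.one_apply, Fin.mk.injEq] at h ⊢
    rw [h]
    simp [Fin.ext_iff]
  -- Z Bh Zᵀ
  have hZB : Z * Bh * Zᵀ = U₁ * ((C₁₁ - σh • 1) * U₁ᵀ) := by
    show Z * (V * Γinv * (C₁₁ - σh • 1) * Γinv * Vᵀ) * Zᵀ = _
    rw [hZ]
    simp only [Matrix.transpose_mul, Matrix.transpose_transpose, Matrix.diagonal_transpose,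
      Matrix.mul_assoc, cV, cV', cΓ, cΓ']
  have trU1 : ∀ (M : Matrix (Fin d) (Fin d) ℝ), (U₁ * (M * U₁ᵀ)).trace = M.trace := by
    intro M
    rw [Matrix.trace_mul_comm, Matrix.mul_assoc, hU1, Matrix.mul_one]
  have htr1 : (Z * Bh * Zᵀ).trace = C₁₁.trace - d * σh := by
    rw [hZB, trU1]
    simp [Matrix.trace_sub, Matrix.trace_smul, Matrix.trace_one, mul_comm]
  -- Xh Ah Xhᵀ
  have hXA : Xh * Ah * Xhᵀ = U₂ * ((Wp * (Ah * Wpᵀ)) * U₂ᵀ) := by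
    show U₂ * Wp * Ah * (U₂ * Wp)ᵀ = _
    simp only [Matrix.transpose_mul, Matrix.mul_assoc]
  have trU2 : ∀ (M : Matrix (Fin e) (Fin e) ℝ), (U₂ * (M * U₂ᵀ)).trace = M.trace := by
    intro M
    rw [Matrix.trace_mul_comm, Matrix.mul_assoc, hU2, Matrix.mul_one]
  have trAh : (Wp * (Ah * Wpᵀ)).trace = Ah.trace := by
    rw [Matrix.trace_mul_comm, Matrix.mul_assoc, hWp, Matrix.mul_one]
  -- sum bookkeeping
  have hep : ((e : ℝ) - p) ≠ 0 := by
    have : (p : ℝ) < e := by exact_mod_cast hpe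
    linarith
  have hσ : ((e : ℝ) - p) * σh = ∑ j ∈ Finset.univ.filter (fun j : Fin e => p ≤ (j : ℕ)), l j := by
    show ((e : ℝ) - p) * (_ / ((e : ℝ) - p)) = _
    field_simp
  have hsum : ∑ j : Fin p, l ⟨j.1, lt_trans j.2 hpe⟩
      = ∑ j ∈ Finset.univ.filter (fun j : Fin e => (j : ℕ) < p), l j := by
    refine Finset.sum_bij (fun j _ => (⟨j.1, lt_trans j.2 hpe⟩ : Fin e)) ?_ ?_ ?_ ?_
    · intro a _; simp [a.2]
    · intro a _ b _ h; simp only [Fin.mk.injEq] at h; exact Fin.ext h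
    · intro b hb; exact ⟨⟨b.1, (Finset.mem_filter.1 hb).2⟩, Finset.mem_univ _, rfl⟩
    · intro a _; rfl
  have hsplit : ∑ j : Fin e, l j
      = (∑ j ∈ Finset.univ.filter (fun j : Fin e => (j : ℕ) < p), l j)
        + ∑ j ∈ Finset.univ.filter (fun j : Fin e => p ≤ (j : ℕ)), l j := by
    rw [← Finset.sum_filter_add_sum_filter_not Finset.univ (fun j : Fin e => (j : ℕ) < p)]
    congr 1
    apply Finset.sum_congr _ (fun _ _ => rfl)
    ext j; simp [not_lt]
  have trC22 : C₂₂.trace = ∑ j : Fin e, l j := by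
    show (U₂ᵀ * C * U₂).trace = _
    rw [hspec, Matrix.trace_mul_comm, ← Matrix.mul_assoc, hW, Matrix.one_mul,
      Matrix.trace_diagonal]
  have hAhtr : Ah.trace = C₂₂.trace - e * σh := by
    show (Matrix.diagonal fun j : Fin p => l ⟨j.1, lt_trans j.2 hpe⟩ - σh).trace = _
    rw [Matrix.trace_diagonal, trC22]
    have hcast : (Finset.univ : Finset (Fin p)).card = p := by simp
    rw [Finset.sum_sub_distrib, Finset.sum_const, hcast, hsum, hsplit]
    have : (e : ℝ) * σh = (∑ j ∈ Finset.univ.filter (fun j : Fin e => p ≤ (j : ℕ)), l j) + p * σh := by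
      have := hσ
      ring_nf
      ring_nf at this
      linarith
    rw [nsmul_eq_mul]
    linarith
  have htr2 : (Xh * Ah * Xhᵀ).trace = C₂₂.trace - e * σh := by
    rw [hXA, trU2, trAh, hAhtr]
  -- cross terms
  have hU21 : U₂ᵀ * U₁ = 0 := by
    have := congrArg Matrix.transpose hU12
    simpa using this
  have hZD : Z * Dh * Xhᵀ = U₁ * ((C₁₂ * (Wp * Wpᵀ)) * U₂ᵀ) := by
    show Z * (V * Γinv * C₁₂ * Wp) * (U₂ * Wp)ᵀ = _
    rw [hZ]
    simp only [Matrix.transpose_mul, Matrix.mul_assoc, cV, cV', cΓ, cΓ']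
  have trcross : (Z * Dh * Xhᵀ).trace = 0 := by
    rw [hZD, Matrix.trace_mul_comm,
      Matrix.mul_assoc (C₁₂ * (Wp * Wpᵀ)) U₂ᵀ U₁, hU21]
    simp
  have trcross' : (Xh * Dhᵀ * Zᵀ).trace = 0 := by
    have : Xh * Dhᵀ * Zᵀ = (Z * Dh * Xhᵀ)ᵀ := by
      simp [Matrix.transpose_mul, Matrix.mul_assoc]
    rw [this, Matrix.trace_transpose, trcross]
  have trsmul : (σh • (1 : Matrix (Fin (d + e)) (Fin (d + e)) ℝ)).trace = (d + e) * σh := by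
    rw [Matrix.trace_smul, Matrix.trace_one, Fintype.card_fin, smul_eq_mul]
    push_cast
    ring
  have htr3 : Kh.trace = (Z * Bh * Zᵀ).trace + (Xh * Ah * Xhᵀ).trace + (d + e) * σh := by
    show (Z * Bh * Zᵀ + Z * Dh * Xhᵀ + Xh * Dhᵀ * Zᵀ + Xh * Ah * Xhᵀ + σh • 1).trace = _
    rw [Matrix.trace_add, Matrix.trace_add, Matrix.trace_add, Matrix.trace_add,
      trcross, trcross', trsmul]
    push_cast
    ring
  -- trace C
  have htrC : C.trace = C₁₁.trace + C₂₂.trace := by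
    have h1 : C.trace = (C * (U₁ * U₁ᵀ)).trace + (C * (U₂ * U₂ᵀ)).trace := by
      rw [← Matrix.trace_add, ← Matrix.mul_add, hcomplete, Matrix.mul_one]
    rw [h1]
    congr 1
    · show _ = (U₁ᵀ * C * U₁).trace
      rw [Matrix.trace_mul_comm, Matrix.mul_assoc U₁ U₁ᵀ C, Matrix.trace_mul_comm]
    · show _ = (U₂ᵀ * C * U₂).trace
      rw [Matrix.trace_mul_comm, Matrix.mul_assoc U₂ U₂ᵀ C, Matrix.trace_mul_comm]
  refine ⟨htr1, htr2, htr3, ?_⟩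
  rw [htrC, htr3, htr1, htr2]
  push_cast
  ring
end
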